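/- For every integer m ≥ 1 and every real p ∈ [0,1]: B(m; 2m+1, p) = B(m; 2m, p) − p · (2m choose m) · p^m (1−p)^m. In particular B(m; 2m+1, p) ≤ B(m; 2m, p) for all p ∈ [0,1]. -/

import Mathlib

/-- Binomial cumulative distribution function:
`B(k; N, p) = ∑_{i=0}^{k} (N choose i) p^i (1-p)^(N-i)`. -/
noncomputable def binCdf (k N : ℕ) (p : ℝ) : ℝ :=
  ∑ i ∈ Finset.range (k + 1), (N.choose i : ℝ) * p ^ i * (1 - p) ^ (N - i)

/-- `g_N(p) = B(⌊N/2⌋; N, p)`. -/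
noncomputable def gN (N : ℕ) (p : ℝ) : ℝ := binCdf (N / 2) N p

/-! Adding one trial to `N` lowers `B(k; N, p)` by exactly the probability that the first `N`
trials give `k` successes and the extra trial is a success; Pascal's rule turns this into an
induction on `k`. -/

theorem binCdf_succ (k N : ℕ) (p : ℝ) :
    binCdf (k + 1) N p =
      binCdf k N p + (N.choose (k + 1) : ℝ) * p ^ (k + 1) * (1 - p) ^ (N - (k + 1)) :=
  Finset.sum_range_succ _ _

theorem binCdf_add_one_trial (k N : ℕ) (p : ℝ) :
    binCdf k (N + 1) p = binCdf k N p - p * (N.choose k : ℝ) * p ^ k * (1 - p) ^ (N - k) := by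
  induction k with
  | zero => simp [binCdf, pow_succ]; ring
  | succ k ih =>
    -- when `k + 1 > N` the exponents disagree, but then the coefficient vanishes
    have tail : (N.choose (k + 1) : ℝ) * (1 - p) ^ (N - k) =
        N.choose (k + 1) * ((1 - p) * (1 - p) ^ (N - (k + 1))) := by
      rcases le_or_gt (k + 1) N with h | h
      · rw [← pow_succ', show N - (k + 1) + 1 = N - k by omega]
      · simp [Nat.choose_eq_zero_of_lt h]
    rw [binCdf_succ, binCdf_succ, ih, Nat.succ_sub_succ, Nat.choose_succ_succ', Nat.cast_add]
    linear_combination p ^ (k + 1) * tail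

theorem binCdf_odd_vs_even_general (m : ℕ) (p : ℝ) (hp0 : 0 ≤ p) (hp1 : p ≤ 1) :
    binCdf m (2 * m + 1) p =
        binCdf m (2 * m) p - p * ((2 * m).choose m : ℝ) * p ^ m * (1 - p) ^ m ∧
      binCdf m (2 * m + 1) p ≤ binCdf m (2 * m) p := by
  have h : binCdf m (2 * m + 1) p =
      binCdf m (2 * m) p - p * ((2 * m).choose m : ℝ) * p ^ m * (1 - p) ^ m := by
    rw [binCdf_add_one_trial, show 2 * m - m = m by omega]
  have hq : 0 ≤ 1 - p := sub_nonneg.mpr hp1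
  refine ⟨h, h ▸ sub_le_self _ ?_⟩
  positivity

theorem binCdf_odd_vs_even (m : ℕ) (hm : 1 ≤ m) (p : ℝ) (hp0 : 0 ≤ p) (hp1 : p ≤ 1) :
    binCdf m (2 * m + 1) p =
        binCdf m (2 * m) p - p * ((2 * m).choose m : ℝ) * p ^ m * (1 - p) ^ m ∧
      binCdf m (2 * m + 1) p ≤ binCdf m (2 * m) p :=
  binCdf_odd_vs_even_general m p hp0 hp1
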